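/- Let R be a (q,s) chain ring and let A be an n×m matrix over R. If B and C are both n×m matrices in row canonical form that are left-equivalent to A, then B = C. That is, the row canonical form of a matrix over a finite chain ring is unique. -/
import Mathlib


open scoped BigOperators

section ChainRingDefs

variable {R : Type*} [CommRing R]

/-- For a shape `μ = (μ₁,…,μ_s)` (0-indexed as `μ : Fin s → ℕ`), the exponent of `π`
governing the `j`-th coordinate (0-indexed) of the module `R^μ`: the number of
components of `μ` that are `≤ j`. -/
def shapeExp {s : ℕ} (μ : Fin s → ℕ) (j : ℕ) : ℕ :=
  (Finset.univ.filter fun i : Fin s => μ i ≤ j).card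

/-- The last (largest) component `μ_s` of a shape (for monotone `μ`). -/
def shapeLast {s : ℕ} (μ : Fin s → ℕ) : ℕ := Finset.univ.sup μ

/-- The module `R^μ = ⟨1⟩^{μ₁} × ⟨π⟩^{μ₂−μ₁} × ⋯ × ⟨π^{s−1}⟩^{μ_s−μ_{s−1}}`,
realized as a submodule of `R^{μ_s}`. -/
def shapeModule (R : Type*) [CommRing R] (π : R) {s : ℕ} (μ : Fin s → ℕ) :
    Submodule R (Fin (shapeLast μ) → R) :=
  Submodule.pi Set.univ fun j => Ideal.span {π ^ shapeExp μ (j : ℕ)}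

/-- The module `M` has shape `μ`, i.e. `M ≅ R^μ`. -/
def HasShape (R : Type*) [CommRing R] (π : R) {s : ℕ} (μ : Fin s → ℕ)
    (M : Type*) [AddCommGroup M] [Module R M] : Prop :=
  Nonempty (M ≃ₗ[R] shapeModule R π μ)

/-- The row span of a matrix: the submodule of `R^m` generated by its rows. -/
def rowSpan (R : Type*) [CommRing R] {n m : ℕ} (A : Matrix (Fin n) (Fin m) R) :
    Submodule R (Fin m → R) :=
  Submodule.span R (Set.range fun i => A i)

-- The degree of `a ∈ R`: the unique `l` with `a ∈ ⟨π^l⟩ \ ⟨π^{l+1}⟩` for `a ≠ 0`,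
-- and `s` for `a = 0`.
open Classical in
noncomputable def degR (π : R) (s : ℕ) (a : R) : ℕ :=
  if a = 0 then s else sSup {l : ℕ | a ∈ Ideal.span {π ^ l}}

/-- `j` is the pivot position of the row `r`: the earliest entry among the entries of
least degree in that row. -/
def IsPivotIdx (π : R) (s : ℕ) {m : ℕ} (r : Fin m → R) (j : Fin m) : Prop :=
  (∀ k, degR π s (r j) ≤ degR π s (r k)) ∧ ∀ k, k < j → degR π s (r j) < degR π s (r k)

/-- `V` is a complete set of residues modulo `π` containing `0`. -/
def IsCompleteResidues (π : R) (V : Set R) : Prop :=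
  0 ∈ V ∧ ∀ a : R, ∃! v, v ∈ V ∧ a - v ∈ Ideal.span {π}

/-- The set `R(R,π^l) = {Σ_{i<l} a_i π^i : a_i ∈ V}` of residues modulo `π^l`. -/
def residueSet (π : R) (V : Set R) (l : ℕ) : Set R :=
  {x | ∃ a : Fin l → R, (∀ i, a i ∈ V) ∧ x = ∑ i, a i * π ^ (i : ℕ)}

/-- The matrix `A` is in row canonical form (with respect to the residue set `V`). -/
def IsRCF (π : R) (s : ℕ) (V : Set R) {n m : ℕ} (A : Matrix (Fin n) (Fin m) R) : Prop :=
  -- (1) nonzero rows lie above zero rows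
  (∀ i i' : Fin n, i < i' → A i' ≠ 0 → A i ≠ 0) ∧
  -- (2) pivots of smaller degree lie above pivots of larger degree; among pivots of
  -- equal degree, earlier pivots lie above later ones
  (∀ i i' : Fin n, ∀ j j' : Fin m, i < i' → A i ≠ 0 → A i' ≠ 0 →
      IsPivotIdx π s (A i) j → IsPivotIdx π s (A i') j' →
      degR π s (A i j) ≤ degR π s (A i' j') ∧
        (degR π s (A i j) = degR π s (A i' j') → j ≤ j')) ∧
  -- (3) every pivot equals `π^l` for some `0 ≤ l ≤ s-1`
  (∀ i : Fin n, ∀ j : Fin m, A i ≠ 0 → IsPivotIdx π s (A i) j →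
      degR π s (A i j) < s ∧ A i j = π ^ degR π s (A i j)) ∧
  -- (4) entries below a pivot in its column are zero; entries above lie in `R(R,π^l)`
  (∀ i : Fin n, ∀ j : Fin m, A i ≠ 0 → IsPivotIdx π s (A i) j →
      (∀ i' : Fin n, i < i' → A i' j = 0) ∧
      (∀ i' : Fin n, i' < i → A i' j ∈ residueSet π V (degR π s (A i j))))

/-- For a shape `κ` (0-indexed) and `i : Fin s`, the previous component `κ_{i-1}`
(`0` when `i = 0`); with the paper's 1-indexed convention this is `κ_i` for the
0-indexed position `i` (whose 1-indexed position is `i+1`). -/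
def prevVal {s : ℕ} (κ : Fin s → ℕ) (i : Fin s) : ℕ :=
  if (i : ℕ) = 0 then 0
  else κ ⟨(i : ℕ) - 1, lt_of_le_of_lt (Nat.sub_le _ _) i.isLt⟩

end ChainRingDefs

section AuxDeg

variable {R : Type*} [CommRing R] {π : R} {s : ℕ}

lemma degR_zero' : degR π s (0 : R) = s := by simp [degR]

lemma degR_ne_zero {a : R} (ha : a ≠ 0) :
    degR π s a = sSup {l : ℕ | a ∈ Ideal.span {π ^ l}} := by
  simp [degR, ha]

lemma pow_ne_zero_of_lt_s (hnil' : π ^ (s - 1) ≠ 0) {l : ℕ} (hl : l < s) : π ^ l ≠ 0 := by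
  intro h
  apply hnil'
  have h2 : π ^ (s - 1) = π ^ l * π ^ (s - 1 - l) := by
    rw [← pow_add]; congr 1; omega
  rw [h2, h, zero_mul]

lemma mem_S_lt (hnil : π ^ s = 0) {a : R} (ha : a ≠ 0) {l : ℕ}
    (hl : a ∈ Ideal.span {π ^ l}) : l < s := by
  by_contra h
  push_neg at h
  rw [Ideal.mem_span_singleton] at hl
  have h2 : π ^ l = 0 := by
    have h3 : π ^ l = π ^ s * π ^ (l - s) := by rw [← pow_add]; congr 1; omega
    rw [h3, hnil, zero_mul]
  rw [h2] at hl
  exact ha (zero_dvd_iff.mp hl)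

lemma bddS (hnil : π ^ s = 0) {a : R} (ha : a ≠ 0) :
    BddAbove {l : ℕ | a ∈ Ideal.span {π ^ l}} :=
  ⟨s, fun l hl => (mem_S_lt hnil ha hl).le⟩

lemma zero_mem_S {a : R} : (0 : ℕ) ∈ {l : ℕ | a ∈ Ideal.span {π ^ l}} := by
  simp [Set.mem_setOf_eq, Ideal.mem_span_singleton]

lemma degR_dvd (hnil : π ^ s = 0) {a : R} : π ^ degR π s a ∣ a := by
  rcases eq_or_ne a 0 with rfl | ha
  · exact dvd_zero _
  · rw [degR_ne_zero ha]
    have hmem := Nat.sSup_mem ⟨0, zero_mem_S⟩ (bddS hnil ha)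
    exact Ideal.mem_span_singleton.mp hmem

lemma dvd_of_le_degR (hnil : π ^ s = 0) {a : R} {l : ℕ} (h : l ≤ degR π s a) :
    π ^ l ∣ a :=
  (pow_dvd_pow π h).trans (degR_dvd hnil)

lemma le_degR (hnil : π ^ s = 0) {a : R} {l : ℕ} (h : π ^ l ∣ a) (hls : l ≤ s) :
    l ≤ degR π s a := by
  rcases eq_or_ne a 0 with rfl | ha
  · rw [degR_zero']; exact hls
  · rw [degR_ne_zero ha]
    exact le_csSup (bddS hnil ha) (Ideal.mem_span_singleton.mpr h)

lemma degR_lt_s (hnil : π ^ s = 0) {a : R} (ha : a ≠ 0) : degR π s a < s := by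
  have hmem := Nat.sSup_mem ⟨0, zero_mem_S (a := a)⟩ (bddS hnil ha)
  rw [degR_ne_zero ha]
  exact mem_S_lt hnil ha hmem

lemma not_dvd_degR_succ (hnil : π ^ s = 0) {a : R} (ha : a ≠ 0) :
    ¬ π ^ (degR π s a + 1) ∣ a := by
  intro h
  have hlt := degR_lt_s hnil ha
  have := le_degR hnil h (by omega)
  omega

end AuxDeg

section AuxLocal

variable {R : Type*} [CommRing R] [IsLocalRing R] {π : R} {s : ℕ}

lemma degR_pow (hmax : IsLocalRing.maximalIdeal R = Ideal.span {π})
    (hnil : π ^ s = 0) (hnil' : π ^ (s - 1) ≠ 0) {l : ℕ} (hl : l < s) :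
    degR π s (π ^ l) = l := by
  have hne : π ^ l ≠ 0 := pow_ne_zero_of_lt_s hnil' hl
  have h1 : l ≤ degR π s (π ^ l) := le_degR hnil dvd_rfl hl.le
  have h2 : ¬ π ^ (l + 1) ∣ π ^ l := by
    rintro ⟨c, hc⟩
    have hπ : ¬ IsUnit (π * c) := by
      intro hu
      have hπu : IsUnit π := isUnit_of_mul_isUnit_left hu
      have : π ∈ IsLocalRing.maximalIdeal R := by
        rw [hmax]; exact Ideal.mem_span_singleton_self π
      exact (mem_nonunits_iff.mp ((IsLocalRing.mem_maximalIdeal π).mp this)) hπu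
    have hu : IsUnit (1 - π * c) :=
      IsLocalRing.isUnit_one_sub_self_of_mem_nonunits _ (mem_nonunits_iff.mpr hπ)
    have hz : π ^ l * (1 - π * c) = 0 := by
      have : π ^ l * (1 - π * c) = π ^ l - π ^ (l + 1) * c := by ring
      rw [this, ← hc, sub_self]
    have hz' : (1 - π * c) * π ^ l = 0 := by rw [mul_comm]; exact hz
    exact hne ((hu.mul_right_eq_zero).mp hz')
  have h4 : degR π s (π ^ l) ≤ l := by
    by_contra h5
    push_neg at h5
    exact h2 ((pow_dvd_pow π h5).trans (degR_dvd hnil))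
  omega

lemma exists_unit_decomp (hmax : IsLocalRing.maximalIdeal R = Ideal.span {π})
    (hnil : π ^ s = 0) {a : R} (ha : a ≠ 0) :
    ∃ c, IsUnit c ∧ a = c * π ^ degR π s a := by
  obtain ⟨c, hc⟩ := degR_dvd hnil (a := a) (π := π) (s := s)
  refine ⟨c, ?_, hc.trans (mul_comm _ _)⟩
  by_contra hcu
  have hmem : c ∈ IsLocalRing.maximalIdeal R :=
    (IsLocalRing.mem_maximalIdeal c).mpr (mem_nonunits_iff.mpr hcu)
  rw [hmax, Ideal.mem_span_singleton] at hmem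
  obtain ⟨e, he⟩ := hmem
  apply not_dvd_degR_succ hnil ha
  refine ⟨e, ?_⟩
  calc a = π ^ degR π s a * c := hc
    _ = π ^ (degR π s a + 1) * e := by rw [he]; ring

lemma pi_cancel (hmax : IsLocalRing.maximalIdeal R = Ideal.span {π})
    (hnil : π ^ s = 0) (hnil' : π ^ (s - 1) ≠ 0) {z : R} {l : ℕ}
    (hls : l + 1 ≤ s) (h : π ^ (l + 1) ∣ π * z) : π ^ l ∣ z := by
  rcases eq_or_ne z 0 with rfl | hz
  · exact dvd_zero _
  obtain ⟨c, hc, hzd⟩ := exists_unit_decomp hmax hnil hz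
  have hdlt : degR π s z < s := degR_lt_s hnil hz
  rcases le_or_gt s (degR π s z + 1) with hcase | hcase
  · exact (pow_dvd_pow π (by omega : l ≤ degR π s z)).trans (degR_dvd hnil)
  · have h2 : π ^ (l + 1) ∣ π ^ (degR π s z + 1) := by
      have h3 : π * z = c * π ^ (degR π s z + 1) := by
        conv_lhs => rw [hzd]
        ring
      rw [h3] at h
      exact (IsUnit.dvd_mul_left hc).mp h
    have h4 := le_degR hnil h2 (by omega)
    rw [degR_pow hmax hnil hnil' hcase] at h4
    exact (pow_dvd_pow π (by omega : l ≤ degR π s z)).trans (degR_dvd hnil)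

end AuxLocal

section AuxResidue

variable {R : Type*} [CommRing R] [IsLocalRing R] {π : R} {s : ℕ} {V : Set R}

lemma residueSet_succ {x : R} {l : ℕ} (hx : x ∈ residueSet π V (l + 1)) :
    ∃ a0 ∈ V, ∃ x' ∈ residueSet π V l, x = a0 + π * x' := by
  obtain ⟨a, ha, rfl⟩ := hx
  refine ⟨a 0, ha 0, ∑ i : Fin l, a i.succ * π ^ (i : ℕ),
    ⟨fun i => a i.succ, fun i => ha _, rfl⟩, ?_⟩
  rw [Fin.sum_univ_succ]
  simp only [Fin.val_zero, pow_zero, mul_one, Finset.mul_sum]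
  congr 1
  apply Finset.sum_congr rfl
  intro i _
  rw [Fin.val_succ, pow_succ]
  ring

lemma residue_unique (hV : IsCompleteResidues π V)
    (hmax : IsLocalRing.maximalIdeal R = Ideal.span {π})
    (hnil : π ^ s = 0) (hnil' : π ^ (s - 1) ≠ 0) :
    ∀ l : ℕ, l ≤ s → ∀ x ∈ residueSet π V l, ∀ y ∈ residueSet π V l,
      π ^ l ∣ x - y → x = y := by
  intro l
  induction l with
  | zero =>
    intro _ x hx y hy _
    obtain ⟨a, _, rfl⟩ := hx
    obtain ⟨b, _, rfl⟩ := hy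
    simp
  | succ l ih =>
    intro hls x hx y hy hdvd
    obtain ⟨a0, ha0, x', hx', rfl⟩ := residueSet_succ hx
    obtain ⟨b0, hb0, y', hy', rfl⟩ := residueSet_succ hy
    have h1 : π ∣ (a0 + π * x') - (b0 + π * y') := by
      have := (pow_dvd_pow π (by omega : 1 ≤ l + 1)).trans hdvd
      rwa [pow_one] at this
    have h2 : π ∣ a0 - b0 := by
      have he : a0 - b0 = ((a0 + π * x') - (b0 + π * y')) - π * (x' - y') := by ring
      rw [he]
      exact dvd_sub h1 (Dvd.intro _ rfl)
    have hab : a0 = b0 := by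
      obtain ⟨v, _, huniq⟩ := hV.2 a0
      have e1 : a0 = v := huniq a0 ⟨ha0, by simp⟩
      have e2 : b0 = v := huniq b0 ⟨hb0, Ideal.mem_span_singleton.mpr h2⟩
      rw [e1, e2]
    have h3 : π ^ (l + 1) ∣ π * (x' - y') := by
      have he : π * (x' - y') = (a0 + π * x') - (b0 + π * y') := by
        rw [hab]; ring
      rw [he]
      exact hdvd
    have h4 : π ^ l ∣ x' - y' := pi_cancel hmax hnil hnil' hls h3
    have h5 := ih (by omega) x' hx' y' hy' h4
    rw [hab, h5]

end AuxResidue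

section AuxPivot

variable {R : Type*} [CommRing R] {π : R} {s : ℕ}

lemma exists_pivotIdx {m : ℕ} {r : Fin m → R} (hr : r ≠ 0) :
    ∃ j, IsPivotIdx π s r j := by
  have hne : Nonempty (Fin m) := by
    rcases Function.ne_iff.mp hr with ⟨k, _⟩
    exact ⟨k⟩
  have hU : (Finset.univ : Finset (Fin m)).Nonempty := Finset.univ_nonempty
  obtain ⟨k0, _, hk0⟩ := Finset.exists_mem_eq_inf' hU (fun k => degR π s (r k))
  set d := Finset.univ.inf' hU (fun k => degR π s (r k)) with hd
  set T := Finset.univ.filter (fun k => degR π s (r k) = d) with hT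
  have hTne : T.Nonempty := ⟨k0, by simp [hT, ← hk0]⟩
  have hjmem' : T.min' hTne ∈ T := Finset.min'_mem _ _
  have hjmem := Finset.mem_filter.mp hjmem'
  refine ⟨T.min' hTne, ?_, ?_⟩
  · intro k
    rw [hjmem.2]
    exact Finset.inf'_le _ (Finset.mem_univ k)
  · intro k hk
    rw [hjmem.2]
    have hknot : k ∉ T := by
      intro hmem
      exact absurd (Finset.min'_le T k hmem) (not_le.mpr hk)
    have h1 : degR π s (r k) ≠ d := fun h =>
      hknot (Finset.mem_filter.mpr ⟨Finset.mem_univ k, h⟩)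
    have h2 : d ≤ degR π s (r k) := Finset.inf'_le _ (Finset.mem_univ k)
    omega

lemma pivot_unique {m : ℕ} {r : Fin m → R} {j j' : Fin m}
    (h : IsPivotIdx π s r j) (h' : IsPivotIdx π s r j') : j = j' := by
  rcases lt_trichotomy j j' with hlt | heq | hlt
  · have h1 := h'.2 j hlt
    have h2 := h.1 j'
    omega
  · exact heq
  · have h1 := h.2 j' hlt
    have h2 := h'.1 j
    omega

end AuxPivot

section AuxSpan

variable {R : Type*} [CommRing R] {n m : ℕ}

lemma row_mem_rowSpan (A : Matrix (Fin n) (Fin m) R) (i : Fin n) :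
    A i ∈ rowSpan R A :=
  Submodule.subset_span ⟨i, rfl⟩

lemma rowSpan_mul_le (U : Matrix (Fin n) (Fin n) R) (A : Matrix (Fin n) (Fin m) R) :
    rowSpan R (U * A) ≤ rowSpan R A := by
  apply Submodule.span_le.mpr
  rintro _ ⟨i, rfl⟩
  show (U * A) i ∈ rowSpan R A
  have h : (U * A) i = ∑ k, U i k • A k := by
    ext j
    simp [Matrix.mul_apply, Finset.sum_apply]
  rw [h]
  exact Submodule.sum_mem _ fun k _ =>
    Submodule.smul_mem _ _ (Submodule.subset_span ⟨k, rfl⟩)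

lemma rowSpan_unit_mul {U : Matrix (Fin n) (Fin n) R} (hU : IsUnit U)
    (A : Matrix (Fin n) (Fin m) R) : rowSpan R (U * A) = rowSpan R A := by
  obtain ⟨u, rfl⟩ := hU
  refine le_antisymm (rowSpan_mul_le _ _) ?_
  have h : A = (↑u⁻¹ : Matrix (Fin n) (Fin n) R) * ((↑u : Matrix (Fin n) (Fin n) R) * A) := by
    rw [← Matrix.mul_assoc]
    rw [show ((↑u⁻¹ : Matrix (Fin n) (Fin n) R) * ↑u) = 1 from u.inv_mul]
    rw [Matrix.one_mul]
  nth_rewrite 1 [h]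
  exact rowSpan_mul_le _ _

lemma exists_rep {B C : Matrix (Fin n) (Fin m) R}
    (hspan : rowSpan R C ≤ rowSpan R B) (i : Fin n) :
    ∃ w : Fin n → R, ∀ j, C i j = ∑ k, w k * B k j := by
  have hmem : C i ∈ rowSpan R B := hspan (row_mem_rowSpan C i)
  rw [rowSpan] at hmem
  obtain ⟨w, hw⟩ := (Submodule.mem_span_range_iff_exists_fun R).mp hmem
  refine ⟨w, fun j => ?_⟩
  rw [← hw]
  simp [Finset.sum_apply]

end AuxSpan

section MainArg

variable {R : Type*} [CommRing R] [IsLocalRing R] {π : R} {s : ℕ} {V : Set R} {n m : ℕ}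

lemma kill_lemma (hnil : π ^ s = 0)
    {B : Matrix (Fin n) (Fin m) R} (hB : IsRCF π s V B)
    (w : Fin n → R) (i : Fin n)
    (h0 : ∀ t : Fin n, t < i → B t ≠ 0 → ∀ j : Fin m, IsPivotIdx π s (B t) j →
      (∑ k, w k * B k j) = 0) :
    ∀ t : Fin n, t < i → ∀ j, w t * B t j = 0 := by
  suffices H : ∀ N : ℕ, ∀ t : Fin n, (t : ℕ) < N → t < i → ∀ j, w t * B t j = 0 by
    intro t ht j
    exact H ((t : ℕ) + 1) t (by omega) ht j
  intro N
  induction N with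
  | zero => intro t ht; omega
  | succ N ih =>
    intro t htN hti
    rcases Nat.lt_or_ge (t : ℕ) N with hc | hc
    · exact ih t hc hti
    · have hIH : ∀ u : Fin n, u < t → ∀ j, w u * B u j = 0 := by
        intro u hu j'
        have hu' : (u : ℕ) < (t : ℕ) := hu
        exact ih u (by omega) (lt_trans hu hti) j'
      by_cases hBt : B t = 0
      · intro j
        rw [congrFun hBt j, Pi.zero_apply, mul_zero]
      · obtain ⟨jt, hjt⟩ := exists_pivotIdx (π := π) (s := s) hBt
        have hsum := h0 t hti hBt jt hjt
        have hone : (∑ k, w k * B k jt) = w t * B t jt := by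
          apply Finset.sum_eq_single
          · intro u _ hut
            rcases lt_or_gt_of_ne hut with h | h
            · exact hIH u h jt
            · rw [(hB.2.2.2 t jt hBt hjt).1 u h, mul_zero]
          · intro h
            exact absurd (Finset.mem_univ t) h
        have hwt : w t * B t jt = 0 := by rw [← hone]; exact hsum
        have hl := (hB.2.2.1 t jt hBt hjt).2
        have hwtl : w t * π ^ degR π s (B t jt) = 0 := by rw [← hl]; exact hwt
        intro j
        obtain ⟨c, hc⟩ := dvd_of_le_degR hnil (hjt.1 j)
        rw [hc]
        calc w t * (π ^ degR π s (B t jt) * c)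
            = (w t * π ^ degR π s (B t jt)) * c := by ring
          _ = 0 := by rw [hwtl, zero_mul]

def PivMatch (π : R) (s : ℕ) (B C : Matrix (Fin n) (Fin m) R) (t : Fin n) : Prop :=
  (B t = 0 ∧ C t = 0) ∨
    (B t ≠ 0 ∧ C t ≠ 0 ∧ ∃ j, IsPivotIdx π s (B t) j ∧ IsPivotIdx π s (C t) j ∧
      degR π s (B t j) = degR π s (C t j))

lemma PivMatch.symm {B C : Matrix (Fin n) (Fin m) R} {t : Fin n}
    (h : PivMatch π s B C t) : PivMatch π s C B t := by
  rcases h with ⟨h1, h2⟩ | ⟨h1, h2, j, h3, h4, h5⟩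
  · exact Or.inl ⟨h2, h1⟩
  · exact Or.inr ⟨h2, h1, j, h4, h3, h5.symm⟩

lemma h0_of_match {B C : Matrix (Fin n) (Fin m) R} (hC : IsRCF π s V C)
    (w : Fin n → R) (i : Fin n)
    (hmatch : ∀ t, t < i → PivMatch π s B C t)
    (hw : ∀ j, C i j = ∑ k, w k * B k j) :
    ∀ t : Fin n, t < i → B t ≠ 0 → ∀ j : Fin m, IsPivotIdx π s (B t) j →
      (∑ k, w k * B k j) = 0 := by
  intro t ht hBt j hj
  rcases hmatch t ht with ⟨h1, _⟩ | ⟨_, hCt, j', hj'B, hj'C, _⟩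
  · exact absurd h1 hBt
  · have hjj : j = j' := pivot_unique hj hj'B
    subst hjj
    have hz : C i j = 0 := (hC.2.2.2 t j hCt hj'C).1 i ht
    rw [← hw j]
    exact hz

lemma zero_half (hnil : π ^ s = 0)
    {B C : Matrix (Fin n) (Fin m) R} (hB : IsRCF π s V B) (hC : IsRCF π s V C)
    (hspan : rowSpan R C ≤ rowSpan R B) (i : Fin n)
    (hmatch : ∀ t, t < i → PivMatch π s B C t) (hBi : B i = 0) : C i = 0 := by
  obtain ⟨w, hw⟩ := exists_rep hspan i
  have hkill := kill_lemma hnil hB w i (h0_of_match hC w i hmatch hw)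
  funext j
  show C i j = 0
  rw [hw j]
  apply Finset.sum_eq_zero
  intro k _
  rcases lt_trichotomy k i with h | h | h
  · exact hkill k h j
  · subst h
    rw [congrFun hBi j, Pi.zero_apply, mul_zero]
  · have hBk : B k = 0 := by
      by_contra hne
      exact (hB.1 i k h hne) hBi
    rw [congrFun hBk j, Pi.zero_apply, mul_zero]

lemma piv_half (hmax : IsLocalRing.maximalIdeal R = Ideal.span {π})
    (hnil : π ^ s = 0) (hnil' : π ^ (s - 1) ≠ 0)
    {B C : Matrix (Fin n) (Fin m) R} (hB : IsRCF π s V B) (hC : IsRCF π s V C)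
    (hspan : rowSpan R C ≤ rowSpan R B) (i : Fin n)
    (hmatch : ∀ t, t < i → PivMatch π s B C t)
    (hBi : B i ≠ 0) (hCi : C i ≠ 0)
    {jB jC : Fin m} (hjB : IsPivotIdx π s (B i) jB) (hjC : IsPivotIdx π s (C i) jC) :
    degR π s (B i jB) ≤ degR π s (C i jC) ∧
      (degR π s (B i jB) = degR π s (C i jC) → jB ≤ jC) := by
  obtain ⟨w, hw⟩ := exists_rep hspan i
  have hkill := kill_lemma hnil hB w i (h0_of_match hC w i hmatch hw)
  have hlBs : degR π s (B i jB) < s := (hB.2.2.1 i jB hBi hjB).1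
  have hlCs : degR π s (C i jC) < s := (hC.2.2.1 i jC hCi hjC).1
  have key : ∀ d : ℕ, ∀ j : Fin m,
      d ≤ degR π s (B i j) →
      (∀ k : Fin n, i < k → B k ≠ 0 → d ≤ degR π s (B k j)) →
      π ^ d ∣ C i j := by
    intro d j hdi hdk
    rw [hw j]
    apply Finset.dvd_sum
    intro k _
    rcases lt_trichotomy k i with h | h | h
    · rw [hkill k h j]
      exact dvd_zero _
    · subst h
      exact (dvd_of_le_degR hnil hdi).mul_left _
    · by_cases hBk : B k = 0
      · rw [congrFun hBk j, Pi.zero_apply, mul_zero]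
        exact dvd_zero _
      · exact (dvd_of_le_degR hnil (hdk k h hBk)).mul_left _
  have hA : degR π s (B i jB) ≤ degR π s (C i jC) := by
    have hdvd : π ^ degR π s (B i jB) ∣ C i jC := by
      apply key _ jC (hjB.1 jC)
      intro k hk hBk
      obtain ⟨jk, hjk⟩ := exists_pivotIdx (π := π) (s := s) hBk
      have h2 := (hB.2.1 i k jB jk hk hBi hBk hjB hjk).1
      exact le_trans h2 (hjk.1 jC)
    rw [(hC.2.2.1 i jC hCi hjC).2] at hdvd
    have h3 := le_degR hnil hdvd hlBs.le
    rwa [degR_pow hmax hnil hnil' hlCs] at h3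
  refine ⟨hA, ?_⟩
  intro heq
  by_contra hjlt
  push_neg at hjlt
  have hdvd : π ^ (degR π s (B i jB) + 1) ∣ C i jC := by
    apply key _ jC
    · have := hjB.2 jC hjlt
      omega
    · intro k hk hBk
      obtain ⟨jk, hjk⟩ := exists_pivotIdx (π := π) (s := s) hBk
      have h2 := hB.2.1 i k jB jk hk hBi hBk hjB hjk
      rcases Nat.lt_or_ge (degR π s (B i jB)) (degR π s (B k jk)) with hcase | hcase
      · have := hjk.1 jC
        omega
      · have hle : degR π s (B i jB) = degR π s (B k jk) := le_antisymm h2.1 hcase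
        have hjBk : jB ≤ jk := h2.2 hle
        have hjck : jC < jk := lt_of_lt_of_le hjlt hjBk
        have := hjk.2 jC hjck
        omega
  rw [(hC.2.2.1 i jC hCi hjC).2, ← heq] at hdvd
  have h3 := le_degR hnil hdvd (by omega)
  rw [degR_pow hmax hnil hnil' hlBs] at h3
  omega

lemma phase1 (hmax : IsLocalRing.maximalIdeal R = Ideal.span {π})
    (hnil : π ^ s = 0) (hnil' : π ^ (s - 1) ≠ 0)
    {B C : Matrix (Fin n) (Fin m) R} (hB : IsRCF π s V B) (hC : IsRCF π s V C)
    (hspan : rowSpan R B = rowSpan R C) :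
    ∀ i : Fin n, PivMatch π s B C i := by
  suffices H : ∀ N : ℕ, ∀ i : Fin n, (i : ℕ) < N → PivMatch π s B C i by
    intro i
    exact H ((i : ℕ) + 1) i (by omega)
  intro N
  induction N with
  | zero => intro i hi; omega
  | succ N ih =>
    intro i hiN
    rcases Nat.lt_or_ge (i : ℕ) N with hc | hc
    · exact ih i hc
    · have hmatch : ∀ t, t < i → PivMatch π s B C t := by
        intro t ht
        have ht' : (t : ℕ) < (i : ℕ) := ht
        exact ih t (by omega)
      have hmatch' : ∀ t, t < i → PivMatch π s C B t := fun t ht => (hmatch t ht).symm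
      by_cases hBi : B i = 0
      · exact Or.inl ⟨hBi, zero_half hnil hB hC hspan.ge i hmatch hBi⟩
      by_cases hCi : C i = 0
      · exact Or.inl ⟨zero_half hnil hC hB hspan.le i hmatch' hCi, hCi⟩
      obtain ⟨jB, hjB⟩ := exists_pivotIdx (π := π) (s := s) hBi
      obtain ⟨jC, hjC⟩ := exists_pivotIdx (π := π) (s := s) hCi
      have h1 := piv_half hmax hnil hnil' hB hC hspan.ge i hmatch hBi hCi hjB hjC
      have h2 := piv_half hmax hnil hnil' hC hB hspan.le i hmatch' hCi hBi hjC hjB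
      have hdeg : degR π s (B i jB) = degR π s (C i jC) := le_antisymm h1.1 h2.1
      have hj : jB = jC := le_antisymm (h1.2 hdeg) (h2.2 hdeg.symm)
      subst hj
      exact Or.inr ⟨hBi, hCi, jB, hjB, hjC, hdeg⟩

lemma phase2 (hmax : IsLocalRing.maximalIdeal R = Ideal.span {π})
    (hnil : π ^ s = 0) (hnil' : π ^ (s - 1) ≠ 0)
    (hV : IsCompleteResidues π V)
    {B C : Matrix (Fin n) (Fin m) R} (hB : IsRCF π s V B) (hC : IsRCF π s V C)
    (hspan : rowSpan R C ≤ rowSpan R B)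
    (hmatch : ∀ t : Fin n, PivMatch π s B C t) (i : Fin n) : B i = C i := by
  rcases hmatch i with ⟨h1, h2⟩ | ⟨hBi, hCi, ji, hjiB, hjiC, hdi⟩
  · rw [h1, h2]
  obtain ⟨w, hw⟩ := exists_rep hspan i
  have hkill := kill_lemma hnil hB w i (h0_of_match hC w i (fun t _ => hmatch t) hw)
  have hls : degR π s (B i ji) < s := (hB.2.2.1 i ji hBi hjiB).1
  have hBpiv : B i ji = π ^ degR π s (B i ji) := (hB.2.2.1 i ji hBi hjiB).2
  have hCpiv : C i ji = π ^ degR π s (B i ji) := by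
    rw [(hC.2.2.1 i ji hCi hjiC).2, ← hdi]
  have hsum_ji : C i ji = w i * π ^ degR π s (B i ji) := by
    rw [hw ji]
    have hone : (∑ k, w k * B k ji) = w i * B i ji := by
      apply Finset.sum_eq_single
      · intro k _ hki
        rcases lt_or_gt_of_ne hki with h | h
        · exact hkill k h ji
        · rw [(hB.2.2.2 i ji hBi hjiB).1 k h, mul_zero]
      · intro h
        exact absurd (Finset.mem_univ i) h
    rw [hone]
    conv_lhs => rw [hBpiv]
  have hwi : w i * π ^ degR π s (B i ji) = π ^ degR π s (B i ji) := by
    rw [← hsum_ji, hCpiv]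
  have hwiB : ∀ j, w i * B i j = B i j := by
    intro j
    obtain ⟨c, hc⟩ := dvd_of_le_degR hnil (hjiB.1 j)
    rw [hc]
    calc w i * (π ^ degR π s (B i ji) * c)
        = (w i * π ^ degR π s (B i ji)) * c := by ring
      _ = π ^ degR π s (B i ji) * c := by rw [hwi]
  have hkill2 : ∀ k : Fin n, i < k → ∀ j, w k * B k j = 0 := by
    suffices H : ∀ N : ℕ, ∀ k : Fin n, (k : ℕ) < N → i < k → ∀ j, w k * B k j = 0 by
      intro k hk j
      exact H ((k : ℕ) + 1) k (by omega) hk j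
    intro N
    induction N with
    | zero => intro k hk; omega
    | succ N ihN =>
      intro k hkN hik
      rcases Nat.lt_or_ge (k : ℕ) N with hc | hc
      · exact ihN k hc hik
      · have hIH : ∀ u : Fin n, i < u → u < k → ∀ j, w u * B u j = 0 := by
          intro u h1 h2 j
          have h2' : (u : ℕ) < (k : ℕ) := h2
          exact ihN u (by omega) h1 j
        by_cases hBk : B k = 0
        · intro j
          rw [congrFun hBk j, Pi.zero_apply, mul_zero]
        · obtain ⟨jk, hjk⟩ := exists_pivotIdx (π := π) (s := s) hBk
          have hlks : degR π s (B k jk) < s := (hB.2.2.1 k jk hBk hjk).1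
          have hBkpiv : B k jk = π ^ degR π s (B k jk) := (hB.2.2.1 k jk hBk hjk).2
          have hCk : C k ≠ 0 ∧ IsPivotIdx π s (C k) jk ∧
              degR π s (C k jk) = degR π s (B k jk) := by
            rcases hmatch k with ⟨hz, _⟩ | ⟨_, hCk', j', hj'B, hj'C, hd⟩
            · exact absurd hz hBk
            · have hjj : j' = jk := pivot_unique hj'B hjk
              subst hjj
              exact ⟨hCk', hj'C, hd.symm⟩
          have hsum_jk : C i jk = B i jk + w k * π ^ degR π s (B k jk) := by
            rw [hw jk]
            rw [← Finset.add_sum_erase Finset.univ _ (Finset.mem_univ k)]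
            have hrest : (∑ u ∈ Finset.univ.erase k, w u * B u jk) = w i * B i jk := by
              apply Finset.sum_eq_single_of_mem i
                (Finset.mem_erase.mpr ⟨Fin.ne_of_lt hik, Finset.mem_univ i⟩)
              intro u hu hui
              have huk : u ≠ k := (Finset.mem_erase.mp hu).1
              rcases lt_trichotomy u i with h | h | h
              · exact hkill u h jk
              · exact absurd h hui
              · rcases lt_trichotomy u k with h' | h' | h'
                · exact hIH u h h' jk
                · exact absurd h' huk
                · rw [(hB.2.2.2 k jk hBk hjk).1 u h', mul_zero]
            rw [hrest, hwiB jk, ← hBkpiv]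
            ring
          have hresB : B i jk ∈ residueSet π V (degR π s (B k jk)) :=
            (hB.2.2.2 k jk hBk hjk).2 i hik
          have hresC : C i jk ∈ residueSet π V (degR π s (B k jk)) := by
            have := (hC.2.2.2 k jk hCk.1 hCk.2.1).2 i hik
            rwa [hCk.2.2] at this
          have hdvd : π ^ degR π s (B k jk) ∣ C i jk - B i jk := by
            have h5 : C i jk - B i jk = w k * π ^ degR π s (B k jk) := by
              rw [hsum_jk]; ring
            rw [h5]
            exact dvd_mul_left _ _
          have heq : C i jk = B i jk :=
            residue_unique hV hmax hnil hnil' _ hlks.le _ hresC _ hresB hdvd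
          have hwk : w k * π ^ degR π s (B k jk) = 0 := by
            have h6 : B i jk + w k * π ^ degR π s (B k jk) = B i jk := by
              rw [← hsum_jk, heq]
            have h7 := sub_eq_zero.mpr h6
            calc w k * π ^ degR π s (B k jk)
                = (B i jk + w k * π ^ degR π s (B k jk)) - B i jk := by ring
              _ = 0 := h7
          intro j
          obtain ⟨c, hc⟩ := dvd_of_le_degR hnil (hjk.1 j)
          rw [hc]
          calc w k * (π ^ degR π s (B k jk) * c)
              = (w k * π ^ degR π s (B k jk)) * c := by ring
            _ = 0 := by rw [hwk, zero_mul]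
  funext j
  rw [hw j]
  have hone : (∑ k, w k * B k j) = w i * B i j := by
    apply Finset.sum_eq_single
    · intro k _ hki
      rcases lt_or_gt_of_ne hki with h | h
      · exact hkill k h j
      · exact hkill2 k h j
    · intro h
      exact absurd (Finset.mem_univ i) h
  rw [hone, hwiB j]

end MainArg


/-- The row canonical form of a matrix over a finite chain ring is unique. -/
theorem rcf_unique {R : Type*} [CommRing R] [Fintype R] [IsLocalRing R] [IsPrincipalIdealRing R]
    (q s : ℕ) (hs : 0 < s) (π : R)
    (hmax : IsLocalRing.maximalIdeal R = Ideal.span {π})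
    (hnil : π ^ s = 0) (hnil' : π ^ (s - 1) ≠ 0)
    (hq : Nat.card (IsLocalRing.ResidueField R) = q)
    (V : Set R) (hV : IsCompleteResidues π V)
    {n m : ℕ} (A B C : Matrix (Fin n) (Fin m) R)
    (hB : IsRCF π s V B) (hC : IsRCF π s V C)
    (hBA : ∃ U : Matrix (Fin n) (Fin n) R, IsUnit U ∧ B = U * A)
    (hCA : ∃ U : Matrix (Fin n) (Fin n) R, IsUnit U ∧ C = U * A) :
    B = C := by
  obtain ⟨U1, hU1, hBA'⟩ := hBA
  obtain ⟨U2, hU2, hCA'⟩ := hCA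
  have hspan : rowSpan R B = rowSpan R C := by
    rw [hBA', hCA', rowSpan_unit_mul hU1, rowSpan_unit_mul hU2]
  have hmatch := phase1 hmax hnil hnil' hB hC hspan
  apply Matrix.ext
  intro i j
  exact congrFun (phase2 hmax hnil hnil' hV hB hC hspan.ge hmatch i) j
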